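/- arXiv:math/0504394 — 2 statements merged into one kernel-verified Lean document; each statement's English description precedes it below -/
import Mathlib

section
/- The Journé multiplicity function m, defined on [-1/2, 1/2) by m(x) = 2 for x ∈ [-1/7, 1/7), m(x) = 1 for x ∈ ±[1/7, 2/7) ∪ ±[3/7, 1/2), and m(x) = 0 otherwise, satisfies the consistency equation m(x) + 1 = m(x/2) + m((x+1)/2) for all x ∈ [-1/2, 1/2), where m is extended 1-periodically to ℝ. -/
open scoped Classical

/-- The Journé multiplicity function on the fundamental domain `[-1/2, 1/2)`. -/
noncomputable def journeM0 (y : ℝ) : ℕ :=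
  if -1/7 ≤ y ∧ y < 1/7 then 2
  else if (1/7 ≤ y ∧ y < 2/7) ∨ (-2/7 ≤ y ∧ y < -1/7) ∨
          (3/7 ≤ y ∧ y < 1/2) ∨ (-1/2 ≤ y ∧ y < -3/7) then 1
  else 0

/-- The 1-periodic extension of the Journé multiplicity function:
`x - ⌊x + 1/2⌋` is the representative of `x` in `[-1/2, 1/2)`. -/
noncomputable def journeM (x : ℝ) : ℕ := journeM0 (x - ⌊x + 1/2⌋)

lemma m0_two {y : ℝ} (h1 : -1/7 ≤ y) (h2 : y < 1/7) : journeM0 y = 2 := by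
  unfold journeM0; rw [if_pos ⟨h1, h2⟩]

lemma m0_one_a {y : ℝ} (h1 : 1/7 ≤ y) (h2 : y < 2/7) : journeM0 y = 1 := by
  unfold journeM0
  rw [if_neg (by push_neg; intro h; linarith), if_pos (Or.inl ⟨h1, h2⟩)]

lemma m0_one_b {y : ℝ} (h1 : -2/7 ≤ y) (h2 : y < -1/7) : journeM0 y = 1 := by
  unfold journeM0
  rw [if_neg (by push_neg; intro h; linarith), if_pos (Or.inr (Or.inl ⟨h1, h2⟩))]

lemma m0_one_c {y : ℝ} (h1 : 3/7 ≤ y) (h2 : y < 1/2) : journeM0 y = 1 := by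
  unfold journeM0
  rw [if_neg (by push_neg; intro h; linarith),
    if_pos (Or.inr (Or.inr (Or.inl ⟨h1, h2⟩)))]

lemma m0_one_d {y : ℝ} (h1 : -1/2 ≤ y) (h2 : y < -3/7) : journeM0 y = 1 := by
  unfold journeM0
  rw [if_neg (by push_neg; intro h; linarith),
    if_pos (Or.inr (Or.inr (Or.inr ⟨h1, h2⟩)))]

lemma m0_zero_pos {y : ℝ} (h1 : 2/7 ≤ y) (h2 : y < 3/7) : journeM0 y = 0 := by
  unfold journeM0
  rw [if_neg (by push_neg; intro h; linarith), if_neg]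
  rintro (⟨a, b⟩ | ⟨a, b⟩ | ⟨a, b⟩ | ⟨a, b⟩) <;> linarith

lemma m0_zero_neg {y : ℝ} (h1 : -3/7 ≤ y) (h2 : y < -2/7) : journeM0 y = 0 := by
  unfold journeM0
  rw [if_neg (by push_neg; intro h; linarith), if_neg]
  rintro (⟨a, b⟩ | ⟨a, b⟩ | ⟨a, b⟩ | ⟨a, b⟩) <;> linarith

lemma journeM_eq_of_mem {x : ℝ} (h1 : -1/2 ≤ x) (h2 : x < 1/2) :
    journeM x = journeM0 x := by
  unfold journeM
  have : ⌊x + 1/2⌋ = 0 := by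
    rw [Int.floor_eq_zero_iff]
    constructor <;> simp <;> linarith
  rw [this]; norm_num

lemma journeM_eq_of_mem' {x : ℝ} (h1 : 1/2 ≤ x) (h2 : x < 3/2) :
    journeM x = journeM0 (x - 1) := by
  unfold journeM
  have : ⌊x + 1/2⌋ = 1 := by
    rw [Int.floor_eq_iff]
    constructor <;> · push_cast; linarith
  rw [this]; norm_num

/-- The Journé multiplicity function satisfies the consistency
equation `m x + 1 = m (x/2) + m ((x+1)/2)` for all `x ∈ [-1/2, 1/2)`. -/
theorem stmt1 :
    ∀ x ∈ Set.Ico (-(1:ℝ)/2) (1/2),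
      journeM x + 1 = journeM (x / 2) + journeM ((x + 1) / 2) := by
  rintro x ⟨h1, h2⟩
  rw [show -(1:ℝ)/2 = -1/2 by norm_num] at h1
  rw [journeM_eq_of_mem h1 h2, journeM_eq_of_mem (by linarith) (by linarith)]
  rcases lt_or_ge x (-3/7) with c1 | c1
  · rw [journeM_eq_of_mem (by linarith) (by linarith),
      m0_one_d h1 c1, m0_one_b (by linarith) (by linarith),
      m0_one_a (by linarith) (by linarith)]
  rcases lt_or_ge x (-2/7) with c2 | c2
  · rw [journeM_eq_of_mem (by linarith) (by linarith),
      m0_zero_neg c1 c2, m0_one_b (by linarith) (by linarith),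
      m0_zero_pos (by linarith) (by linarith)]
  rcases lt_or_ge x (-1/7) with c3 | c3
  · rw [journeM_eq_of_mem (by linarith) (by linarith),
      m0_one_b c2 c3, m0_two (by linarith) (by linarith),
      m0_zero_pos (by linarith) (by linarith)]
  rcases lt_or_ge x 0 with c4 | c4
  · rw [journeM_eq_of_mem (by linarith) (by linarith),
      m0_two c3 (by linarith), m0_two (by linarith) (by linarith),
      m0_one_c (by linarith) (by linarith)]
  rcases lt_or_ge x (1/7) with c5 | c5
  · rw [journeM_eq_of_mem' (by linarith) (by linarith),
      m0_two (by linarith) c5, m0_two (by linarith) (by linarith),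
      m0_one_d (by linarith) (by linarith)]
  rcases lt_or_ge x (2/7) with c6 | c6
  · rw [journeM_eq_of_mem' (by linarith) (by linarith),
      m0_one_a c5 c6, m0_two (by linarith) (by linarith),
      m0_zero_neg (by linarith) (by linarith)]
  rcases lt_or_ge x (3/7) with c7 | c7
  · rw [journeM_eq_of_mem' (by linarith) (by linarith),
      m0_zero_pos c6 c7, m0_one_a (by linarith) (by linarith),
      m0_zero_neg (by linarith) (by linarith)]
  · rw [journeM_eq_of_mem' (by linarith) (by linarith),
      m0_one_c c7 h2, m0_one_a (by linarith) (by linarith),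
      m0_one_b (by linarith) (by linarith)]
end

section
/- Suppose φ̂₁, φ̂₂ ∈ L²(ℝ) have disjoint supports, and Per φᵢ(x) := Σ_{j∈ℤ} |φ̂ᵢ(x+j)|² is essentially bounded on [0,1] for i = 1, 2, with support (mod 1) equal to Sᵢ ⊆ [0,1]. Then the map T: L²(S₁) ⊕ L²(S₂) → L²(ℝ) defined by T(f₁, f₂) = f₁·φ̂₁ + f₂·φ̂₂ (fᵢ extended 1-periodically) is a bounded linear map, with ‖T(f₁,f₂)‖² = ∫₀¹ (|f₁(x)|²·Per φ₁(x) + |f₂(x)|²·Per φ₂(x)) dx ≤ max(‖Per φ₁‖_∞, ‖Per φ₂‖_∞) · (‖f₁‖² + ‖f₂‖²). -/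
/-!
Cutting `ℝ` into the translates `(j, j + 1]` of the unit interval turns `∫_ℝ u` into
`∫_(0,1] ∑_j u (x + j)`. For `u = ‖f₁ φ₁ + f₂ φ₂‖²` the cross term vanishes since `φ₁ φ₂ = 0`,
and periodicity pulls `‖fᵢ x‖²` out of the sum, leaving `‖f₁‖² Per φ₁ + ‖f₂‖² Per φ₂`.
The real `tsum` in `Per φᵢ` is `0` off summability, so the a.e. summability coming from
`φᵢ ∈ L²` is what makes this the true periodization. The bound then follows from `Per φᵢ ≤ Cᵢ`.
-/

open MeasureTheory Set

open scoped ENNReal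

theorem AEMeasurable.comp_add_const {β : Type*} [MeasurableSpace β] {g : ℝ → β}
    (hg : AEMeasurable g) (c : ℝ) : AEMeasurable fun x => g (x + c) :=
  hg.comp_quasiMeasurePreserving (quasiMeasurePreserving_add_right _ c)

theorem lintegral_eq_setLIntegral_Ioc_tsum_add_intCast {g : ℝ → ℝ≥0∞} (hg : AEMeasurable g) :
    ∫⁻ x, g x = ∫⁻ x in Ioc 0 1, ∑' j : ℤ, g (x + j) := by
  calc ∫⁻ x, g x = ∫⁻ x in ⋃ j : ℤ, Ioc (j : ℝ) (j + 1), g x := by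
        rw [iUnion_Ioc_intCast, Measure.restrict_univ]
    _ = ∑' j : ℤ, ∫⁻ x in Ioc (j : ℝ) (j + 1), g x :=
        lintegral_iUnion (fun _ => measurableSet_Ioc) (pairwise_disjoint_Ioc_intCast ℝ) g
    _ = ∑' j : ℤ, ∫⁻ x in Ioc 0 1, g (x + j) := by
        refine tsum_congr fun j => ?_
        rw [(measurePreserving_add_right volume (j : ℝ)).setLIntegral_comp_emb
          (measurableEmbedding_addRight _), image_add_const_Ioc, zero_add, add_comm 1]
    _ = ∫⁻ x in Ioc 0 1, ∑' j : ℤ, g (x + j) :=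
        (lintegral_tsum fun j : ℤ => (hg.comp_add_const j).restrict).symm

theorem MeasureTheory.Integrable.ae_summable_comp_add_intCast {E : Type*}
    [NormedAddCommGroup E] [CompleteSpace E] {u : ℝ → E} (hu : Integrable u) :
    ∀ᵐ x ∂volume.restrict (Ioc 0 1), Summable fun j : ℤ => u (x + j) := by
  have hfin : ∫⁻ x in Ioc 0 1, ∑' j : ℤ, ‖u (x + j)‖ₑ ≠ ∞ := by
    rw [← lintegral_eq_setLIntegral_Ioc_tsum_add_intCast hu.1.enorm]
    exact hu.2.ne
  have hmeas : AEMeasurable (fun x => ∑' j : ℤ, ‖u (x + j)‖ₑ) (volume.restrict (Ioc 0 1)) :=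
    (AEMeasurable.tsum fun j : ℤ => hu.1.enorm.comp_add_const j).restrict
  filter_upwards [ae_lt_top' hmeas hfin] with x hx
  exact .of_nnnorm (ENNReal.tsum_coe_ne_top_iff_summable.mp hx.ne)

theorem integral_eq_setIntegral_Icc_of_ae_hasSum {u G : ℝ → ℝ} (hu : AEMeasurable u)
    (hu₀ : ∀ x, 0 ≤ u x)
    (hG : ∀ᵐ x ∂volume.restrict (Ioc 0 1), HasSum (fun j : ℤ => u (x + j)) (G x)) :
    ∫ x, u x = ∫ x in Icc 0 1, G x := by
  have hsum : ∀ᵐ x ∂volume.restrict (Ioc 0 1),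
      ∑' j : ℤ, ENNReal.ofReal (u (x + j)) = ENNReal.ofReal (G x) := by
    filter_upwards [hG] with x hx
    rw [← ENNReal.ofReal_tsum_of_nonneg (fun j => hu₀ _) hx.summable, hx.tsum_eq]
  have hmeas : AEMeasurable (fun x => ∑' j : ℤ, ENNReal.ofReal (u (x + j)))
      (volume.restrict (Ioc 0 1)) :=
    (AEMeasurable.tsum fun j : ℤ => hu.ennreal_ofReal.comp_add_const j).restrict
  rw [integral_eq_lintegral_of_nonneg_ae (.of_forall hu₀) hu.aestronglyMeasurable,
    lintegral_eq_setLIntegral_Ioc_tsum_add_intCast hu.ennreal_ofReal,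
    ← integral_toReal hmeas (hsum.mono fun x hx => hx ▸ ENNReal.ofReal_lt_top),
    Measure.restrict_congr_set Ioc_ae_eq_Icc.symm]
  refine integral_congr_ae ?_
  filter_upwards [hsum, hG] with x hx hGx
  rw [hx, ENNReal.toReal_ofReal (hGx.nonneg fun j => hu₀ _)]

theorem norm_mul_add_mul_sq_of_mul_eq_zero {𝕜 : Type*} [NormedDivisionRing 𝕜] {a b c d : 𝕜}
    (h : b * d = 0) : ‖a * b + c * d‖ ^ 2 = ‖a‖ ^ 2 * ‖b‖ ^ 2 + ‖c‖ ^ 2 * ‖d‖ ^ 2 := by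
  rcases mul_eq_zero.mp h with rfl | rfl <;> simp [mul_pow]

theorem hasSum_norm_sq_periodic_mul_add_periodic_mul {𝕜 : Type*} [NormedDivisionRing 𝕜]
    {f₁ f₂ φ₁ φ₂ : ℝ → 𝕜} (hf₁ : Function.Periodic f₁ 1) (hf₂ : Function.Periodic f₂ 1)
    (hφ : ∀ x, φ₁ x * φ₂ x = 0) {x : ℝ} (h₁ : Summable fun j : ℤ => ‖φ₁ (x + j)‖ ^ 2)
    (h₂ : Summable fun j : ℤ => ‖φ₂ (x + j)‖ ^ 2) :
    HasSum (fun j : ℤ => ‖f₁ (x + j) * φ₁ (x + j) + f₂ (x + j) * φ₂ (x + j)‖ ^ 2)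
      (‖f₁ x‖ ^ 2 * ∑' j : ℤ, ‖φ₁ (x + j)‖ ^ 2 + ‖f₂ x‖ ^ 2 * ∑' j : ℤ, ‖φ₂ (x + j)‖ ^ 2) := by
  refine ((h₁.hasSum.mul_left (‖f₁ x‖ ^ 2)).add (h₂.hasSum.mul_left (‖f₂ x‖ ^ 2))).congr_fun
    fun j => ?_
  have hj : ∀ f : ℝ → 𝕜, Function.Periodic f 1 → f (x + j) = f x := fun f hf => by
    simpa using hf.int_mul j x
  rw [norm_mul_add_mul_sq_of_mul_eq_zero (hφ _), hj f₁ hf₁, hj f₂ hf₂]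

theorem stmt17_general (φ1 φ2 f1 f2 : ℝ → ℂ) (C1 C2 : ℝ)
    (hφ1 : MeasureTheory.MemLp φ1 2 volume)
    (hφ2 : MeasureTheory.MemLp φ2 2 volume)
    (hdisj : ∀ x, φ1 x * φ2 x = 0)
    (hPer1bd : ∀ x, ∑' j : ℤ, ‖φ1 (x + j)‖ ^ 2 ≤ C1)
    (hPer2bd : ∀ x, ∑' j : ℤ, ‖φ2 (x + j)‖ ^ 2 ≤ C2)
    (hf1per : ∀ x, f1 (x + 1) = f1 x) (hf2per : ∀ x, f2 (x + 1) = f2 x)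
    (hf1m : Measurable f1) (hf2m : Measurable f2)
    (hf1L2 : MeasureTheory.MemLp f1 2 (volume.restrict (Icc (0:ℝ) 1)))
    (hf2L2 : MeasureTheory.MemLp f2 2 (volume.restrict (Icc (0:ℝ) 1))) :
    (∫ x : ℝ, ‖f1 x * φ1 x + f2 x * φ2 x‖ ^ 2)
      = ∫ x in Icc (0:ℝ) 1,
          (‖f1 x‖ ^ 2 * ∑' j : ℤ, ‖φ1 (x + j)‖ ^ 2 +
           ‖f2 x‖ ^ 2 * ∑' j : ℤ, ‖φ2 (x + j)‖ ^ 2) ∧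
    (∫ x : ℝ, ‖f1 x * φ1 x + f2 x * φ2 x‖ ^ 2)
      ≤ max C1 C2 *
          ((∫ x in Icc (0:ℝ) 1, ‖f1 x‖ ^ 2) + ∫ x in Icc (0:ℝ) 1, ‖f2 x‖ ^ 2) := by
  have hEq : (∫ x : ℝ, ‖f1 x * φ1 x + f2 x * φ2 x‖ ^ 2) = ∫ x in Icc (0:ℝ) 1,
      (‖f1 x‖ ^ 2 * ∑' j : ℤ, ‖φ1 (x + j)‖ ^ 2 + ‖f2 x‖ ^ 2 * ∑' j : ℤ, ‖φ2 (x + j)‖ ^ 2) := by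
    have hφ1m := hφ1.1.aemeasurable
    have hφ2m := hφ2.1.aemeasurable
    refine integral_eq_setIntegral_Icc_of_ae_hasSum (by fun_prop) (fun x => sq_nonneg _) ?_
    filter_upwards [(hφ1.integrable_norm_pow two_ne_zero).ae_summable_comp_add_intCast,
      (hφ2.integrable_norm_pow two_ne_zero).ae_summable_comp_add_intCast] with x h₁ h₂
    exact hasSum_norm_sq_periodic_mul_add_periodic_mul hf1per hf2per hdisj h₁ h₂
  have hbound : ∀ x, ‖f1 x‖ ^ 2 * ∑' j : ℤ, ‖φ1 (x + j)‖ ^ 2 +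
      ‖f2 x‖ ^ 2 * ∑' j : ℤ, ‖φ2 (x + j)‖ ^ 2 ≤ max C1 C2 * (‖f1 x‖ ^ 2 + ‖f2 x‖ ^ 2) := fun x => by
    rw [mul_add, mul_comm _ (‖f1 x‖ ^ 2), mul_comm _ (‖f2 x‖ ^ 2)]
    gcongr
    exacts [(hPer1bd x).trans (le_max_left _ _), (hPer2bd x).trans (le_max_right _ _)]
  have hf1int := hf1L2.integrable_norm_pow two_ne_zero
  have hf2int := hf2L2.integrable_norm_pow two_ne_zero
  refine ⟨hEq, hEq ▸ ?_⟩
  rw [← integral_add hf1int hf2int, ← integral_const_mul]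
  refine integral_mono_of_nonneg (.of_forall fun x => ?_) ((hf1int.add hf2int).const_mul _)
    (.of_forall hbound)
  positivity

/-- If `φ̂₁, φ̂₂ ∈ L²(ℝ)` have disjoint supports and the
periodizations `Per φᵢ(x) = Σ_{j∈ℤ} |φ̂ᵢ(x+j)|²` are bounded, with support
(mod 1) equal to `Sᵢ ⊆ [0,1]`, then `T(f₁,f₂) = f₁·φ̂₁ + f₂·φ̂₂` (with `fᵢ`
1-periodic, supported mod 1 in `Sᵢ`) is norm-bounded:
`‖T(f₁,f₂)‖² = ∫₀¹ (|f₁|²·Per φ₁ + |f₂|²·Per φ₂) ≤ max C₁ C₂ · (‖f₁‖² + ‖f₂‖²)`. -/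
theorem stmt17 (φ1 φ2 f1 f2 : ℝ → ℂ) (S1 S2 : Set ℝ) (C1 C2 : ℝ)
    (hS1 : MeasurableSet S1) (hS2 : MeasurableSet S2)
    (hS1sub : S1 ⊆ Icc 0 1) (hS2sub : S2 ⊆ Icc 0 1)
    (hφ1 : MeasureTheory.MemLp φ1 2 volume)
    (hφ2 : MeasureTheory.MemLp φ2 2 volume)
    (hdisj : ∀ x, φ1 x * φ2 x = 0)
    (hPer1bd : ∀ x, ∑' j : ℤ, ‖φ1 (x + j)‖ ^ 2 ≤ C1)
    (hPer2bd : ∀ x, ∑' j : ℤ, ‖φ2 (x + j)‖ ^ 2 ≤ C2)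
    (hPer1supp : ∀ x ∈ Icc (0:ℝ) 1, (∑' j : ℤ, ‖φ1 (x + j)‖ ^ 2 ≠ 0 ↔ x ∈ S1))
    (hPer2supp : ∀ x ∈ Icc (0:ℝ) 1, (∑' j : ℤ, ‖φ2 (x + j)‖ ^ 2 ≠ 0 ↔ x ∈ S2))
    (hf1per : ∀ x, f1 (x + 1) = f1 x) (hf2per : ∀ x, f2 (x + 1) = f2 x)
    (hf1m : Measurable f1) (hf2m : Measurable f2)
    (hf1supp : ∀ x ∈ Icc (0:ℝ) 1, x ∉ S1 → f1 x = 0)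
    (hf2supp : ∀ x ∈ Icc (0:ℝ) 1, x ∉ S2 → f2 x = 0)
    (hf1L2 : MeasureTheory.MemLp f1 2 (volume.restrict (Icc (0:ℝ) 1)))
    (hf2L2 : MeasureTheory.MemLp f2 2 (volume.restrict (Icc (0:ℝ) 1))) :
    (∫ x : ℝ, ‖f1 x * φ1 x + f2 x * φ2 x‖ ^ 2)
      = ∫ x in Icc (0:ℝ) 1,
          (‖f1 x‖ ^ 2 * ∑' j : ℤ, ‖φ1 (x + j)‖ ^ 2 +
           ‖f2 x‖ ^ 2 * ∑' j : ℤ, ‖φ2 (x + j)‖ ^ 2) ∧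
    (∫ x : ℝ, ‖f1 x * φ1 x + f2 x * φ2 x‖ ^ 2)
      ≤ max C1 C2 *
          ((∫ x in Icc (0:ℝ) 1, ‖f1 x‖ ^ 2) + ∫ x in Icc (0:ℝ) 1, ‖f2 x‖ ^ 2) :=
  stmt17_general φ1 φ2 f1 f2 C1 C2 hφ1 hφ2 hdisj hPer1bd hPer2bd hf1per hf2per hf1m hf2m hf1L2 hf2L2
end
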